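/- arXiv:2202.08738 — 5 statements merged into one kernel-verified Lean document; each statement's English description precedes it below -/
import Mathlib

section
/- For every integer t ≥ 3, there is no integer x with x^2 = 2^{2t+4} + 16t + 9, because 2^{2t+4} < x^2 < (2^{t+2}+1)^2. -/
lemma aux_bound : ∀ t : ℕ, 3 ≤ t → 16 * t + 9 < 2 ^ (t + 3) := by
  intro t ht
  induction t with
  | zero => omega
  | succ n ih =>
    rcases Nat.lt_or_ge n 3 with h | h
    · interval_cases n <;> simp_all
    · have hn := ih h
      have h16 : (16 : ℕ) ≤ 2 ^ (n + 3) := by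
        calc (16:ℕ) ≤ 2 ^ 6 := by norm_num
        _ ≤ 2 ^ (n + 3) := Nat.pow_le_pow_right (by norm_num) (by omega)
      have : 2 ^ (n + 1 + 3) = 2 ^ (n + 3) + 2 ^ (n + 3) := by ring
      omega

theorem stmt_4 (t : ℕ) (ht : 3 ≤ t) :
    ¬ ∃ x : ℤ, x ^ 2 = 2 ^ (2 * t + 4) + 16 * t + 9 := by
  rintro ⟨x, hx⟩
  set n : ℤ := 2 ^ (t + 2) with hn
  have hnpos : 0 < n := by positivity
  have hsq : n ^ 2 = 2 ^ (2 * t + 4) := by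
    rw [hn, ← pow_mul]; ring_nf
  have hb : (16 * t + 9 : ℤ) < 2 ^ (t + 3) := by
    exact_mod_cast (by exact_mod_cast aux_bound t ht : ((16 * t + 9 : ℕ) : ℤ) < (2 ^ (t + 3) : ℕ))
  have h2n : (2 : ℤ) ^ (t + 3) = 2 * n := by rw [hn]; ring
  have hb' : (16 * t + 9 : ℤ) < 2 * n := h2n ▸ hb
  have h1 : n ^ 2 < x ^ 2 := by rw [hx, ← hsq]; push_cast; nlinarith
  have h2 : x ^ 2 < (n + 1) ^ 2 := by rw [hx, ← hsq]; push_cast at hb' ⊢; nlinarith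
  have ha1 : n < |x| := by
    refine lt_of_pow_lt_pow_left₀ 2 (abs_nonneg x) ?_
    rw [sq_abs]; exact h1
  have ha2 : |x| < n + 1 := by
    refine lt_of_pow_lt_pow_left₀ 2 (by positivity : (0:ℤ) ≤ n + 1) ?_
    rw [sq_abs]; exact h2
  omega
end

section
/- For all integers t ≥ 4, if x is a positive integer with x^2 = 2^{2t+3} + 16t + 1, then (2^{2t+3}) < x^2 < 2^{2t+3} + 2^{t+3}· √2 + 1 forces x = ⌊2^{t+1}√2⌋ + 1, i.e. x - 1 = ⌊2^{t+1}√2⌋. -/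
/-!
Put `N = 2^(2t+3)`, so that `2^(t+1) √2 = √N` and `⌊√N⌋ = Nat.sqrt N`. Writing `x = q + 1`,
the equation reads `(q+1)² = N + 2·(8t) + 1`, hence `N = q² + 2(q - 8t)` lies in `[q², (q+1)²)`
as soon as `8t ≤ q`. That in turn follows from `x² ≥ (8t+1)²`, i.e. from `64 t² ≤ 2^(2t+3)`,
which holds for `t ≥ 4`.
-/

theorem Nat.sqrt_eq_of_add_one_sq_eq {n q k : ℕ} (h : (q + 1) ^ 2 = n + 2 * k + 1) (hk : k ≤ q) :
    Nat.sqrt n = q :=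
  (Nat.eq_sqrt.2 ⟨by nlinarith, by nlinarith⟩).symm

theorem sixty_four_mul_sq_le_two_pow {t : ℕ} (ht : 4 ≤ t) : 64 * t ^ 2 ≤ 2 ^ (2 * t + 3) := by
  induction t, ht using Nat.le_induction with
  | base => norm_num
  | succ t ht ih =>
    calc 64 * (t + 1) ^ 2 ≤ 4 * (64 * t ^ 2) := by nlinarith
      _ ≤ 4 * 2 ^ (2 * t + 3) := by gcongr
      _ = 2 ^ (2 * (t + 1) + 3) := by ring

theorem two_pow_mul_sqrt_two (t : ℕ) :
    (2 : ℝ) ^ (t + 1) * Real.sqrt 2 = Real.sqrt ((2 ^ (2 * t + 3) : ℕ) : ℝ) := by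
  rw [eq_comm, Real.sqrt_eq_iff_mul_self_eq_of_pos (by positivity)]
  push_cast
  ring_nf
  rw [Real.sq_sqrt zero_le_two]
  ring

theorem stmt_7 (t x : ℕ) (ht : 4 ≤ t) (hx : 0 < x)
    (h : (x : ℤ) ^ 2 = 2 ^ (2 * t + 3) + 16 * t + 1) :
    (x : ℤ) = ⌊(2 : ℝ) ^ (t + 1) * Real.sqrt 2⌋ + 1 := by
  obtain ⟨q, rfl⟩ : ∃ q, x = q + 1 := ⟨x - 1, by omega⟩
  have hsq : (q + 1) ^ 2 = 2 ^ (2 * t + 3) + 2 * (8 * t) + 1 := by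
    push_cast at h
    zify
    linarith
  have hq : 8 * t ≤ q := by
    have : (8 * t + 1) ^ 2 ≤ (q + 1) ^ 2 := by nlinarith [sixty_four_mul_sq_le_two_pow ht]
    have := (Nat.pow_le_pow_iff_left two_ne_zero).1 this
    omega
  rw [two_pow_mul_sqrt_two, Real.floor_real_sqrt_eq_nat_sqrt, Nat.sqrt_eq_of_add_one_sq_eq hsq hq]
  norm_cast
end

section
/- Assume the Bauer–Bennett bound: for integers p and q = 2^k with k > 2, |√2 - p/q| > q^{-1.48}. Then for every integer t ≥ 11, 2^{2t+3} - ⌊2^{t+3/2}⌋^2 > 16t - 1, and hence x^2 = 2^{2t+3} - 16t + 1 has no integer solution x for t ≥ 11. -/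
/-! With `q = 2 ^ (t + 1)` and `m = ⌊q √2⌋` we have `2 ^ (2t + 3) - m² = (q √2 - m)(q √2 + m)`.
The Bauer–Bennett bound makes the first factor exceed `q ^ (-0.48)` and the second exceeds
`(√2 + 1) q > 2.41 q`, so the difference exceeds `2.41 q ^ 0.52`, which beats `16t - 1` once
`t ≥ 11`. Hence `2 ^ (2t + 3) - 16t + 1` lies strictly between `m²` and `(m + 1)²`. -/

lemma Int.not_exists_sq_of_sq_lt_of_lt_sq {m n : ℤ} (hm : 0 ≤ m) (hl : m ^ 2 < n)
    (hr : n < (m + 1) ^ 2) : ¬∃ x : ℤ, x ^ 2 = n := by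
  rintro ⟨x, rfl⟩
  have h₁ : |m| < |x| := sq_lt_sq.mp hl
  have h₂ : |x| < |m + 1| := sq_lt_sq.mp hr
  rw [abs_of_nonneg hm] at h₁
  rw [abs_of_nonneg (by omega : 0 ≤ m + 1)] at h₂
  omega

lemma Real.lt_rpow_div_of_pow_lt {a b : ℝ} (ha : 0 ≤ a) (hb : 0 ≤ b) {m n : ℕ} (hn : 0 < n)
    (h : a ^ n < b ^ m) : a < b ^ ((m : ℝ) / n) := by
  rw [div_eq_mul_inv, Real.rpow_mul hb, Real.rpow_natCast,
    Real.lt_rpow_inv_iff_of_pos ha (by positivity) (by positivity), Real.rpow_natCast]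
  exact h

lemma sixteen_mul_sub_one_lt_rpow {t : ℕ} (ht : 11 ≤ t) :
    16 * (t : ℝ) - 1 < 2.41 * ((2 : ℝ) ^ (t + 1)) ^ (0.52 : ℝ) := by
  induction t, ht using Nat.le_induction with
  | base =>
    have h : (73 : ℝ) < ((2 : ℝ) ^ 12) ^ ((13 : ℕ) / (25 : ℕ) : ℝ) :=
      Real.lt_rpow_div_of_pow_lt (by norm_num) (by norm_num) (by norm_num) (by norm_num)
    norm_num at h ⊢
    linarith
  | succ t ht ih =>
    have h : (1.4 : ℝ) < 2 ^ ((13 : ℕ) / (25 : ℕ) : ℝ) :=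
      Real.lt_rpow_div_of_pow_lt (by norm_num) (by norm_num) (by norm_num) (by norm_num)
    have hsplit : ((2 : ℝ) ^ (t + 1 + 1)) ^ (0.52 : ℝ)
        = ((2 : ℝ) ^ (t + 1)) ^ (0.52 : ℝ) * 2 ^ (0.52 : ℝ) := by
      rw [pow_succ, Real.mul_rpow (by positivity) (by norm_num)]
    have hpos : 0 < ((2 : ℝ) ^ (t + 1)) ^ (0.52 : ℝ) := by positivity
    have htR : (11 : ℝ) ≤ t := by exact_mod_cast ht
    norm_num at h
    rw [hsplit]
    push_cast
    nlinarith [mul_lt_mul_of_pos_left h hpos]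

lemma lt_two_mul_sq_sub_floor_mul_sqrt_two_sq {q : ℕ} (hq : 0 < q)
    (h : (q : ℝ) ^ (-(1.48) : ℝ) < |√2 - ⌊q * √2⌋ / q|) :
    2.41 * (q : ℝ) ^ (0.52 : ℝ) < 2 * (q : ℝ) ^ 2 - (⌊q * √2⌋ : ℝ) ^ 2 := by
  set m := ⌊(q : ℝ) * √2⌋
  have hqR : (0 : ℝ) < q := by exact_mod_cast hq
  have hsqrt : (1.41 : ℝ) < √2 := by
    rw [Real.lt_sqrt (by norm_num)]; norm_num
  have hm_le : (m : ℝ) ≤ q * √2 := Int.floor_le _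
  have hq_le : (q : ℝ) ≤ m := by
    have : ((q : ℤ) : ℝ) ≤ q * √2 := by
      push_cast; nlinarith
    exact_mod_cast Int.le_floor.mpr this
  have hsub : (q : ℝ) ^ (-(0.48) : ℝ) < q * √2 - m := by
    rw [abs_of_nonneg (by rw [sub_nonneg, div_le_iff₀ hqR]; linarith)] at h
    calc (q : ℝ) ^ (-(0.48) : ℝ) = q * (q : ℝ) ^ (-(1.48) : ℝ) := by
          rw [← Real.rpow_one_add' hqR.le (by norm_num)]; norm_num
      _ < q * (√2 - m / q) := mul_lt_mul_of_pos_left h hqR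
      _ = q * √2 - m := by field_simp
  have hadd : 2.41 * (q : ℝ) < q * √2 + m := by nlinarith
  calc 2.41 * (q : ℝ) ^ (0.52 : ℝ) = (q : ℝ) ^ (-(0.48) : ℝ) * (2.41 * q) := by
        rw [mul_left_comm, ← Real.rpow_add_one hqR.ne']; norm_num
    _ < (q * √2 - m) * (q * √2 + m) :=
        mul_lt_mul'' hsub hadd (by positivity) (by positivity)
    _ = (q * √2) ^ 2 - (m : ℝ) ^ 2 := by ring
    _ = 2 * (q : ℝ) ^ 2 - (m : ℝ) ^ 2 := by rw [mul_pow, Real.sq_sqrt zero_le_two, mul_comm]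

theorem stmt_13
    (hBB : ∀ k : ℕ, 2 < k → ∀ p : ℤ,
      |Real.sqrt 2 - (p : ℝ) / 2 ^ k| > ((2 : ℝ) ^ k) ^ (-(1.48) : ℝ)) :
    ∀ t : ℕ, 11 ≤ t →
      (2 : ℤ) ^ (2 * t + 3) - ⌊(2 : ℝ) ^ (t + 1) * Real.sqrt 2⌋ ^ 2 > 16 * (t : ℤ) - 1 ∧
      ¬ ∃ x : ℤ, x ^ 2 = 2 ^ (2 * t + 3) - 16 * t + 1 := by
  intro t ht
  set m := ⌊(2 : ℝ) ^ (t + 1) * √2⌋ with hm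
  have hgap : 2.41 * ((2 : ℝ) ^ (t + 1)) ^ (0.52 : ℝ) < 2 ^ (2 * t + 3) - (m : ℝ) ^ 2 := by
    have h := lt_two_mul_sq_sub_floor_mul_sqrt_two_sq (q := 2 ^ (t + 1)) (by positivity)
      (by exact_mod_cast hBB (t + 1) (by omega) _)
    push_cast [← hm] at h
    linarith [show (2 : ℝ) ^ (2 * t + 3) = 2 * ((2 : ℝ) ^ (t + 1)) ^ 2 by ring]
  have hlow : (2 : ℤ) ^ (2 * t + 3) - m ^ 2 > 16 * (t : ℤ) - 1 := by
    have := sixteen_mul_sub_one_lt_rpow ht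
    exact_mod_cast (by linarith : (16 * (t : ℝ) - 1 : ℝ) < 2 ^ (2 * t + 3) - (m : ℝ) ^ 2)
  have hup : (2 : ℤ) ^ (2 * t + 3) < (m + 1) ^ 2 := by
    have hsq : ((2 : ℝ) ^ (t + 1) * √2) ^ 2 = 2 ^ (2 * t + 3) := by
      rw [mul_pow, Real.sq_sqrt zero_le_two]; ring
    have h : (2 : ℝ) ^ (t + 1) * √2 < m + 1 := Int.lt_floor_add_one _
    have h' : (((2 : ℤ) ^ (2 * t + 3) : ℤ) : ℝ) < ((m + 1) ^ 2 : ℤ) := by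
      push_cast
      rw [← hsq]
      exact pow_lt_pow_left₀ h (by positivity) two_ne_zero
    exact Int.cast_lt.mp h'
  have hm0 : 0 ≤ m := Int.floor_nonneg.mpr (by positivity)
  exact ⟨hlow, Int.not_exists_sq_of_sq_lt_of_lt_sq hm0 (by omega) (by omega)⟩
end

section
/- For every integer t ≥ 7, there is no integer x with x^2 = 3^{2t} + (2t)^3 + 2t, since 3^{2t} < x^2 < (3^t + 1)^2. -/
/- Write `N = 3^(2t) + (2t)^3 + 2t`. Since `3^(2t) = (3^t)^2`, the number `N` exceeds `(3^t)^2`,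
and it falls short of `(3^t + 1)^2 = 3^(2t) + 2·3^t + 1` as soon as `(2t)^3 + 2t < 2·3^t`, which
holds for `t ≥ 7` because the right side triples at each step while the left side grows by a factor
of at most `(8/7)^3 < 3`. So `N` lies strictly between two consecutive squares. -/

lemma two_mul_cube_add_two_mul_lt_two_mul_three_pow {n : ℕ} (hn : 7 ≤ n) :
    (2 * n) ^ 3 + 2 * n < 2 * 3 ^ n := by
  induction n, hn using Nat.le_induction with
  | base => norm_num
  | succ n hn ih =>
    have hgrowth : (2 * (n + 1)) ^ 3 + 2 * (n + 1) ≤ 3 * ((2 * n) ^ 3 + 2 * n) := by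
      nlinarith [sq_nonneg n]
    rw [pow_succ 3 n]
    omega

theorem stmt_16 (t : ℕ) (ht : 7 ≤ t) :
    ¬ ∃ x : ℤ, x ^ 2 = 3 ^ (2 * t) + (2 * t) ^ 3 + 2 * t := by
  rintro ⟨x, hx⟩
  have hnat : x.natAbs ^ 2 = 3 ^ (2 * t) + (2 * t) ^ 3 + 2 * t := by
    rw [← Int.natAbs_pow, hx]
    norm_cast
  have hsq : 3 ^ (2 * t) = (3 ^ t) ^ 2 := by rw [mul_comm, pow_mul]
  have hcube := two_mul_cube_add_two_mul_lt_two_mul_three_pow ht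
  refine Nat.not_exists_sq' (m := 3 ^ t) ?_ ?_ ⟨_, hnat⟩
  · rw [← hsq]
    omega
  · nlinarith [hsq]
end

section
/- Assume the Bauer–Bennett bound: for integers p and q = 3^k with k > 2, |√3 - p/q| > q^{-1.65}. Then for every integer t ≥ 29, (⌊3^{t+1/2}⌋ + 1)^2 - 3^{2t+1} > (2t+1)^3 + (2t+1), hence 3^{2t+1} + (2t+1)^3 + (2t+1) is not a perfect square for t ≥ 29. -/
lemma key_nat : ∀ t : ℕ, 29 ≤ t →
    ((2*t+1)^3 + (2*t+1))^20 < 2^20 * 3^(10 + 7*t) := by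
  intro t ht
  induction t, ht using Nat.le_induction with
  | base => norm_num
  | succ n hn ih =>
    have h8 : 8 * ((2*(n+1)+1)^3 + (2*(n+1)+1)) ≤ 9 * ((2*n+1)^3 + (2*n+1)) := by
      nlinarith [hn, Nat.mul_le_mul_right (n*n) hn, Nat.mul_le_mul_right n hn]
    have h1 : (8 * ((2*(n+1)+1)^3 + (2*(n+1)+1)))^20 ≤ (9 * ((2*n+1)^3 + (2*n+1)))^20 :=
      Nat.pow_le_pow_left h8 20
    rw [mul_pow, mul_pow] at h1
    have h2 : (9:ℕ)^20 * ((2*n+1)^3 + (2*n+1))^20 < 9^20 * (2^20 * 3^(10+7*n)) :=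
      mul_lt_mul_of_pos_left ih (by positivity)
    have h3 : (9:ℕ)^20 * (2^20 * 3^(10+7*n)) ≤ 8^20 * (2187 * (2^20 * 3^(10+7*n))) := by
      rw [← mul_assoc, ← mul_assoc, ← mul_assoc]
      exact mul_le_mul_left (by norm_num) _
    have h4 : 8^20 * ((2*(n+1)+1)^3 + (2*(n+1)+1))^20 < 8^20 * (2^20 * 3^(10+7*(n+1))) := by
      calc 8^20 * ((2*(n+1)+1)^3 + (2*(n+1)+1))^20 ≤ 9^20 * ((2*n+1)^3 + (2*n+1))^20 := h1
        _ < 9^20 * (2^20 * 3^(10+7*n)) := h2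
        _ ≤ 8^20 * (2187 * (2^20 * 3^(10+7*n))) := h3
        _ = 8^20 * (2^20 * 3^(10+7*(n+1))) := by
            rw [show 10+7*(n+1) = (10+7*n)+7 by ring, pow_add]; ring
    exact Nat.lt_of_mul_lt_mul_left h4

lemma keyR (t : ℕ) (ht : 29 ≤ t) :
    ((2*(t:ℝ)+1)^3 + (2*(t:ℝ)+1)) < 2 * Real.sqrt 3 * (3:ℝ) ^ ((t:ℝ) * (7/20)) := by
  have h3 : (0:ℝ) ≤ 3 := by norm_num
  refine lt_of_pow_lt_pow_left₀ 20 (by positivity) ?_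
  have hsq : (Real.sqrt 3)^20 = 3^10 := by
    rw [show (20:ℕ) = 2*10 from rfl, pow_mul, Real.sq_sqrt h3]
  have hr : ((3:ℝ) ^ ((t:ℝ) * (7/20)))^20 = (3:ℝ)^(7*t) := by
    rw [← Real.rpow_natCast ((3:ℝ) ^ ((t:ℝ) * (7/20))) 20, ← Real.rpow_mul h3]
    rw [show (t:ℝ) * (7/20) * ((20:ℕ):ℝ) = ((7*t : ℕ) : ℝ) by push_cast; ring]
    exact Real.rpow_natCast 3 (7*t)
  have h : (((2*(t:ℝ)+1)^3 + (2*(t:ℝ)+1)))^20 < 2^20 * 3^(10+7*t) := by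
    exact_mod_cast key_nat t ht
  rw [pow_add] at h
  rw [mul_pow, mul_pow, hsq, hr]
  linarith [h]


set_option maxHeartbeats 1000000 in
theorem stmt_17
    (hBB : ∀ k : ℕ, 2 < k → ∀ p : ℤ,
      |Real.sqrt 3 - (p : ℝ) / 3 ^ k| > ((3 : ℝ) ^ k) ^ (-(1.65) : ℝ)) :
    ∀ t : ℕ, 29 ≤ t →
      (⌊(3 : ℝ) ^ t * Real.sqrt 3⌋ + 1) ^ 2 - 3 ^ (2 * t + 1) >
        (2 * (t : ℤ) + 1) ^ 3 + (2 * (t : ℤ) + 1) ∧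
      ¬ IsSquare ((3 : ℤ) ^ (2 * t + 1) + (2 * (t : ℤ) + 1) ^ 3 + (2 * (t : ℤ) + 1)) := by
  intro t ht
  set x : ℝ := (3:ℝ) ^ t * Real.sqrt 3 with hxdef
  set m : ℤ := ⌊x⌋ with hmdef
  have hs3 : (0:ℝ) < Real.sqrt 3 := Real.sqrt_pos.mpr (by norm_num)
  have h3t : (0:ℝ) < (3:ℝ)^t := by positivity
  have hxpos : 0 < x := by positivity
  have hx2 : x^2 = (3:ℝ)^(2*t+1) := by
    rw [hxdef, mul_pow, Real.sq_sqrt (by norm_num : (0:ℝ) ≤ 3), ← pow_mul, ← pow_succ]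
    congr 1; ring
  have hxlt : x < (m:ℝ) + 1 := Int.lt_floor_add_one x
  have hbb := hBB t (by omega) (m+1)
  have hq : Real.sqrt 3 < ((m+1 : ℤ):ℝ) / 3^t := by
    rw [lt_div_iff₀ h3t]
    push_cast
    rw [mul_comm]
    exact hxlt
  have habs : |Real.sqrt 3 - ((m+1 : ℤ):ℝ) / 3^t| = ((m+1 : ℤ):ℝ) / 3^t - Real.sqrt 3 := by
    rw [abs_sub_comm, abs_of_pos (by linarith)]
  rw [habs] at hbb
  have hrw : ((3:ℝ)^t) ^ (-(1.65) : ℝ) = (3:ℝ) ^ ((t:ℝ) * (-(33/20)) : ℝ) := by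
    rw [← Real.rpow_natCast 3 t, ← Real.rpow_mul (by norm_num : (0:ℝ) ≤ 3)]
    norm_num
  rw [hrw] at hbb
  have hdiff : (3:ℝ) ^ ((t:ℝ) * (-(13/20)) : ℝ) < ((m+1 : ℤ):ℝ) - x := by
    have h1 : (3:ℝ)^t * ((3:ℝ) ^ ((t:ℝ) * (-(33/20)) : ℝ)) <
        (3:ℝ)^t * (((m+1 : ℤ):ℝ) / 3^t - Real.sqrt 3) :=
      mul_lt_mul_of_pos_left hbb h3t
    have h2 : (3:ℝ)^t * (((m+1 : ℤ):ℝ) / 3^t - Real.sqrt 3) = ((m+1 : ℤ):ℝ) - x := by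
      field_simp [hxdef]
      rw [hxdef]
    have h3 : (3:ℝ)^t * ((3:ℝ) ^ ((t:ℝ) * (-(33/20)) : ℝ)) = (3:ℝ) ^ ((t:ℝ) * (-(13/20)) : ℝ) := by
      rw [← Real.rpow_natCast 3 t, ← Real.rpow_add (by norm_num : (0:ℝ) < 3)]
      congr 1; ring
    rw [h2, h3] at h1
    exact h1
  have hsum : 2 * x < ((m+1 : ℤ):ℝ) + x := by push_cast; linarith
  have hA : (0:ℝ) < (3:ℝ) ^ ((t:ℝ) * (-(13/20)) : ℝ) := Real.rpow_pos_of_pos (by norm_num) _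
  have hprod : (3:ℝ) ^ ((t:ℝ) * (-(13/20)) : ℝ) * (2 * x) <
      (((m+1 : ℤ):ℝ) - x) * (((m+1 : ℤ):ℝ) + x) :=
    mul_lt_mul'' hdiff hsum (le_of_lt hA) (by positivity)
  have hfact : (((m+1 : ℤ):ℝ) - x) * (((m+1 : ℤ):ℝ) + x) = ((m+1 : ℤ):ℝ)^2 - (3:ℝ)^(2*t+1) := by
    rw [← hx2]; ring
  have hlhs : 2 * Real.sqrt 3 * (3:ℝ) ^ ((t:ℝ) * (7/20) : ℝ) =
      (3:ℝ) ^ ((t:ℝ) * (-(13/20)) : ℝ) * (2 * x) := by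
    rw [hxdef, ← Real.rpow_natCast 3 t,
      show (3:ℝ) ^ ((t:ℝ) * (-(13/20)) : ℝ) * (2 * ((3:ℝ)^((t:ℝ)) * Real.sqrt 3)) =
        2 * Real.sqrt 3 * ((3:ℝ) ^ ((t:ℝ) * (-(13/20)) : ℝ) * (3:ℝ)^((t:ℝ))) from by ring,
      ← Real.rpow_add (by norm_num : (0:ℝ) < 3)]
    congr 1; ring
  have hmain : ((2*(t:ℝ)+1)^3 + (2*(t:ℝ)+1)) < ((m+1 : ℤ):ℝ)^2 - (3:ℝ)^(2*t+1) := by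
    have := keyR t ht
    rw [hlhs] at this
    linarith [hprod, hfact.symm.le, hfact.le]
  -- first conjunct
  have hg1 : (m + 1) ^ 2 - 3 ^ (2 * t + 1) > (2 * (t:ℤ) + 1) ^ 3 + (2 * (t:ℤ) + 1) := by
    have hcast : ((2*(t:ℤ)+1)^3 + (2*(t:ℤ)+1) : ℝ) < (((m+1)^2 - 3^(2*t+1) : ℤ) : ℝ) := by
      push_cast
      push_cast at hmain
      linarith
    exact_mod_cast hcast
  refine ⟨hg1, ?_⟩
  -- second conjunct
  have hirr : Irrational x := by
    have h1 : Irrational (Real.sqrt 3) := by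
      have := Nat.prime_three.irrational_sqrt
      simpa using this
    have h2 := h1.natCast_mul (m := 3^t) (by positivity)
    rw [hxdef]
    convert h2 using 2
    push_cast
    ring
  have hm1 : 1 ≤ m := by
    rw [hmdef]
    refine Int.le_floor.mpr ?_
    have h1 : (1:ℝ) ≤ Real.sqrt 3 := by
      rw [show (1:ℝ) = Real.sqrt 1 by simp]
      exact Real.sqrt_le_sqrt (by norm_num)
    have h2 : (1:ℝ) ≤ (3:ℝ)^t := one_le_pow₀ (by norm_num)
    push_cast
    nlinarith
  have hmltx : (m:ℝ) < x := lt_of_le_of_ne (Int.floor_le x) (fun h => (hirr.ne_int m) h.symm)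
  have hm2 : m^2 < 3^(2*t+1) := by
    have h1 : ((m:ℝ))^2 < x^2 := by
      have hm0 : (0:ℝ) ≤ (m:ℝ) := by exact_mod_cast (by omega : (0:ℤ) ≤ m)
      nlinarith
    rw [hx2] at h1
    exact_mod_cast h1
  rintro ⟨r, hr⟩
  have hpos : 0 < (2*(t:ℤ)+1)^3 + (2*(t:ℤ)+1) := by positivity
  have h5 : m^2 < r * r := by
    rw [← hr]
    nlinarith
  have h6 : r * r < (m+1)^2 := by rw [← hr]; linarith
  have habsr : m < |r| := by
    refine lt_of_pow_lt_pow_left₀ 2 (abs_nonneg r) ?_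
    rw [sq_abs]
    nlinarith
  have h7 : (m+1)^2 ≤ |r|^2 := pow_le_pow_left₀ (by omega) (by omega) 2
  rw [sq_abs] at h7
  nlinarith
end
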